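/- arXiv:2204.12849 — 6 statements merged into one kernel-verified Lean document; each statement's English description precedes it below -/
import Mathlib

section
/- Let G be a finite group and let H₁ and H₂ be subnormal subgroups of G. Then the subgroup ⟨H₁, H₂⟩ generated by H₁ and H₂ is a subnormal subgroup of G. -/
/-- `H` is normal in `K` (both viewed as subgroups of an ambient group `G`):
`H ≤ K` and `H` is closed under conjugation by elements of `K`. -/
def NormalIn {G : Type*} [Group G] (H K : Subgroup G) : Prop :=
  H ≤ K ∧ ∀ h ∈ H, ∀ k ∈ K, k⁻¹ * h * k ∈ H

/-- A subgroup `H` of `G` is subnormal if there is a chain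
`H = K₀ ⊴ K₁ ⊴ ⋯ ⊴ Kₙ = G` with each `Kᵢ₋₁` normal in `Kᵢ`. -/
def IsSubnormal {G : Type*} [Group G] (H : Subgroup G) : Prop :=
  ∃ (n : ℕ) (c : Fin (n + 1) → Subgroup G),
    c 0 = H ∧ c (Fin.last n) = ⊤ ∧ ∀ i : Fin n, NormalIn (c i.castSucc) (c i.succ)

namespace Wielandt

variable {G : Type*} [Group G]

/-- Subnormal chain of length `n` from `H` up to `M`, recursion at the top. -/
def SNChain : ℕ → Subgroup G → Subgroup G → Prop
  | 0, H, M => H = M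
  | n+1, H, M => ∃ K, SNChain n H K ∧ NormalIn K M

lemma SNChain.le : ∀ {n : ℕ} {H M : Subgroup G}, SNChain n H M → H ≤ M
  | 0, _, _, h => le_of_eq h
  | _+1, _, _, ⟨_, hc, hn⟩ => hc.le.trans hn.1

lemma SNChain.prepend : ∀ {n : ℕ} {H K M : Subgroup G},
    NormalIn H K → SNChain n K M → SNChain (n+1) H M
  | 0, H, _, _, hn, h => ⟨H, rfl, h ▸ hn⟩
  | _+1, _, _, _, hn, ⟨L, hc, hLM⟩ => ⟨L, SNChain.prepend hn hc, hLM⟩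

lemma snChain_of_series : ∀ (n : ℕ) (c : Fin (n+1) → Subgroup G),
    (∀ i : Fin n, NormalIn (c i.castSucc) (c i.succ)) →
    SNChain n (c 0) (c (Fin.last n)) := by
  intro n
  induction n with
  | zero => intro c _; rfl
  | succ n ihn =>
    intro c hc
    refine ⟨c (Fin.last n).castSucc, ?_, ?_⟩
    · have h' : ∀ i : Fin n, NormalIn ((fun j => c j.castSucc) (Fin.castSucc i))
          ((fun j => c j.castSucc) i.succ) := by
        intro i
        have h := hc i.castSucc
        rwa [Fin.succ_castSucc] at h
      have := ihn (fun j => c j.castSucc) h'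
      simpa using this
    · have h := hc (Fin.last n)
      rwa [Fin.succ_last] at h

lemma series_of_snChain : ∀ (n : ℕ) {H M : Subgroup G}, SNChain n H M →
    ∃ c : Fin (n+1) → Subgroup G, c 0 = H ∧ c (Fin.last n) = M ∧
      ∀ i : Fin n, NormalIn (c i.castSucc) (c i.succ) := by
  intro n
  induction n with
  | zero =>
    intro H M h
    exact ⟨fun _ => H, rfl, h, fun i => i.elim0⟩
  | succ n ihn =>
    intro H M h
    obtain ⟨K, hc, hKM⟩ := h
    obtain ⟨c', h0, hl, hsteps⟩ := ihn hc
    refine ⟨Fin.snoc c' M, ?_, ?_, ?_⟩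
    · rw [show (0 : Fin (n+2)) = (0 : Fin (n+1)).castSucc from rfl, Fin.snoc_castSucc]
      exact h0
    · rw [Fin.snoc_last]
    · intro i
      refine Fin.lastCases ?_ ?_ i
      · rw [Fin.snoc_castSucc, Fin.succ_last, Fin.snoc_last, hl]
        exact hKM
      · intro j
        rw [Fin.snoc_castSucc, Fin.succ_castSucc, Fin.snoc_castSucc]
        exact hsteps j

lemma isSubnormal_iff {H : Subgroup G} : IsSubnormal H ↔ ∃ n, SNChain n H ⊤ := by
  constructor
  · rintro ⟨n, c, h0, hl, hsteps⟩
    exact ⟨n, by rw [← h0, ← hl]; exact snChain_of_series n c hsteps⟩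
  · rintro ⟨n, hc⟩
    obtain ⟨c, h0, hl, hsteps⟩ := series_of_snChain n hc
    exact ⟨n, c, h0, hl, hsteps⟩

lemma isSubnormal_top : IsSubnormal (⊤ : Subgroup G) :=
  ⟨0, fun _ => ⊤, rfl, rfl, fun i => i.elim0⟩

section Hom

variable {G₂ : Type*} [Group G₂] (f : G →* G₂)

lemma NormalIn.comap {A B : Subgroup G₂} (h : NormalIn A B) :
    NormalIn (A.comap f) (B.comap f) := by
  refine ⟨Subgroup.comap_mono h.1, fun x hx k hk => ?_⟩
  simp only [Subgroup.mem_comap] at *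
  simpa [map_mul, map_inv] using h.2 _ hx _ hk

lemma NormalIn.map {A B : Subgroup G} (h : NormalIn A B) :
    NormalIn (A.map f) (B.map f) := by
  refine ⟨Subgroup.map_mono h.1, ?_⟩
  rintro x hx k hk
  obtain ⟨a, ha, rfl⟩ := hx
  obtain ⟨b, hb, rfl⟩ := hk
  exact ⟨b⁻¹ * a * b, h.2 _ ha _ hb, by simp [map_mul, map_inv]⟩

lemma SNChain.comap : ∀ {n : ℕ} {A B : Subgroup G₂}, SNChain n A B →
    SNChain n (A.comap f) (B.comap f)
  | 0, _, _, h => by rw [h]; rfl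
  | _+1, _, _, ⟨K, hc, hn⟩ => ⟨K.comap f, SNChain.comap hc, NormalIn.comap f hn⟩

lemma SNChain.map : ∀ {n : ℕ} {A B : Subgroup G}, SNChain n A B →
    SNChain n (A.map f) (B.map f)
  | 0, _, _, h => by rw [h]; rfl
  | _+1, _, _, ⟨K, hc, hn⟩ => ⟨K.map f, SNChain.map hc, NormalIn.map f hn⟩

end Hom

/-! ### Conjugate subgroups -/

/-- `conjS m U = {x | m * x * m⁻¹ ∈ U}`, the conjugate `m⁻¹ U m`. -/
def conjS (m : G) (U : Subgroup G) : Subgroup G :=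
  U.comap (MulAut.conj m).toMonoidHom

lemma mem_conjS {m x : G} {U : Subgroup G} : x ∈ conjS m U ↔ m * x * m⁻¹ ∈ U := by
  simp [conjS, Subgroup.mem_comap]

lemma conjS_conjS (a b : G) (U : Subgroup G) : conjS a (conjS b U) = conjS (b * a) U := by
  ext x
  have h : b * (a * x * a⁻¹) * b⁻¹ = (b * a) * x * (b * a)⁻¹ := by group
  rw [mem_conjS, mem_conjS, mem_conjS, h]

lemma conjS_one (U : Subgroup G) : conjS 1 U = U := by
  ext x; rw [mem_conjS]; simp

lemma conjS_mono (m : G) {U U' : Subgroup G} (h : U ≤ U') : conjS m U ≤ conjS m U' :=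
  Subgroup.comap_mono h

lemma conjS_bot (m : G) : conjS m (⊥ : Subgroup G) = ⊥ := by
  ext x
  rw [mem_conjS]
  simp only [Subgroup.mem_bot, mul_inv_eq_one]
  constructor
  · intro h; exact mul_left_cancel (a := m) (by rw [h, mul_one])
  · rintro rfl; simp

lemma conjS_ne_bot {m : G} {U : Subgroup G} (h : U ≠ ⊥) : conjS m U ≠ ⊥ := by
  intro hbot
  apply h
  have := congrArg (conjS m⁻¹) hbot
  rwa [conjS_conjS, mul_inv_cancel, conjS_one, conjS_bot] at this

lemma conjS_cancel (m : G) (U : Subgroup G) : conjS m⁻¹ (conjS m U) = U := by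
  rw [conjS_conjS, mul_inv_cancel, conjS_one]

lemma conjS_cancel' (m : G) (U : Subgroup G) : conjS m (conjS m⁻¹ U) = U := by
  rw [conjS_conjS, inv_mul_cancel, conjS_one]


/-! ### Minimality machinery -/

lemma exists_min_aux [Finite G] :
    ∀ (n : ℕ) (T : Set (Subgroup G)) (V : Subgroup G), V ∈ T → Nat.card V ≤ n →
      ∃ U ∈ T, U ≤ V ∧ ∀ X ∈ T, X ≤ U → X = U := by
  intro n
  induction n with
  | zero =>
    intro T V hV hle
    have : 0 < Nat.card V := Nat.card_pos
    omega
  | succ n ih =>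
    intro T V hV hle
    by_cases h : ∀ X ∈ T, X ≤ V → X = V
    · exact ⟨V, hV, le_rfl, h⟩
    · push_neg at h
      obtain ⟨X, hX, hXV, hne⟩ := h
      have hlt : Nat.card X < Nat.card V := by
        refine lt_of_le_of_ne (Subgroup.card_le_of_le hXV) fun hc => hne ?_
        exact Subgroup.eq_of_le_of_card_ge hXV (le_of_eq hc.symm)
      obtain ⟨U, hU, hUX, hmin⟩ := ih T X hX (by omega)
      exact ⟨U, hU, hUX.trans hXV, hmin⟩

/-- `U` is a minimal `M`-normal subgroup contained in `V`. -/
def MinIn (U M V : Subgroup G) : Prop :=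
  NormalIn U M ∧ U ≤ V ∧ U ≠ ⊥ ∧
    ∀ X : Subgroup G, NormalIn X M → X ≤ U → X = ⊥ ∨ X = U

lemma normalIn_conjS {M' M U : Subgroup G} (hM'M : NormalIn M' M) {m : G} (hm : m ∈ M)
    (hU : NormalIn U M') : NormalIn (conjS m U) M' := by
  constructor
  · intro x hx
    rw [mem_conjS] at hx
    have h1 : m⁻¹ * (m * x * m⁻¹) * m ∈ M' := hM'M.2 _ (hU.1 hx) _ hm
    have e : m⁻¹ * (m * x * m⁻¹) * m = x := by group
    rwa [e] at h1
  · intro x hx k hk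
    rw [mem_conjS] at hx ⊢
    have hmk : m⁻¹⁻¹ * k * m⁻¹ ∈ M' := hM'M.2 _ hk _ (inv_mem hm)
    rw [inv_inv] at hmk
    have h2 := hU.2 _ hx _ hmk
    have e2 : (m * k * m⁻¹)⁻¹ * (m * x * m⁻¹) * (m * k * m⁻¹)
        = m * (k⁻¹ * x * k) * m⁻¹ := by group
    rwa [e2] at h2

lemma minIn_conjS {M' M V U : Subgroup G} (hM'M : NormalIn M' M) (hVM : NormalIn V M)
    {m : G} (hm : m ∈ M) (hU : MinIn U M' V) : MinIn (conjS m U) M' V := by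
  obtain ⟨hUn, hUV, hUb, hUmin⟩ := hU
  refine ⟨normalIn_conjS hM'M hm hUn, ?_, conjS_ne_bot hUb, ?_⟩
  · intro x hx
    rw [mem_conjS] at hx
    have h1 := hVM.2 _ (hUV hx) _ hm
    have e : m⁻¹ * (m * x * m⁻¹) * m = x := by group
    rwa [e] at h1
  · intro X hXn hXle
    have hX' : NormalIn (conjS m⁻¹ X) M' := normalIn_conjS hM'M (inv_mem hm) hXn
    have hle' : conjS m⁻¹ X ≤ U := by
      have h1 := conjS_mono m⁻¹ hXle
      rwa [conjS_cancel] at h1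
    rcases hUmin _ hX' hle' with hb | he
    · left
      have h1 := congrArg (conjS m) hb
      rwa [conjS_cancel', conjS_bot] at h1
    · right
      have h1 := congrArg (conjS m) he
      rwa [conjS_cancel'] at h1

/-- Key lemma: a minimal `M`-normal subgroup `V` normalizes every subgroup
subnormal in `M`. -/
lemma lemA [Finite G] :
    ∀ (n : ℕ) (M V H : Subgroup G), NormalIn V M →
      (∀ W : Subgroup G, NormalIn W M → W ≤ V → W = ⊥ ∨ W = V) →
      SNChain n H M → ∀ v ∈ V, ∀ h ∈ H, v⁻¹ * h * v ∈ H := by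
  intro n
  induction n with
  | zero =>
    intro M V H hVM _ hc v hv h hh
    have hc' : H = M := hc
    subst hc'
    exact mul_mem (mul_mem (inv_mem (hVM.1 hv)) hh) (hVM.1 hv)
  | succ n ih =>
    intro M V H hVM hmin hc v hv h hh
    obtain ⟨M', hcM', hM'M⟩ := hc
    by_cases hVbot : V = ⊥
    · subst hVbot
      rw [Subgroup.mem_bot] at hv
      subst hv
      simpa using hh
    have hHM' : H ≤ M' := hcM'.le
    have hint : NormalIn (V ⊓ M') M := by
      refine ⟨inf_le_left.trans hVM.1, ?_⟩
      intro x hx k hk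
      rw [Subgroup.mem_inf] at hx ⊢
      exact ⟨hVM.2 _ hx.1 _ hk, hM'M.2 _ hx.2 _ hk⟩
    rcases hmin _ hint inf_le_left with hbot | heq
    · -- trivial intersection: V centralizes M' ⊇ H
      have hhM : h ∈ M := hM'M.1 (hHM' hh)
      have hxV : h⁻¹ * (v⁻¹ * h * v) ∈ V := by
        have h1 : (h⁻¹ * v⁻¹ * h) * v ∈ V := mul_mem (hVM.2 _ (inv_mem hv) _ hhM) hv
        have e : h⁻¹ * (v⁻¹ * h * v) = (h⁻¹ * v⁻¹ * h) * v := by group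
        rwa [e]
      have hxM' : h⁻¹ * (v⁻¹ * h * v) ∈ M' :=
        mul_mem (inv_mem (hHM' hh)) (hM'M.2 _ (hHM' hh) _ (hVM.1 hv))
      have hx1 : h⁻¹ * (v⁻¹ * h * v) = 1 := by
        have : h⁻¹ * (v⁻¹ * h * v) ∈ V ⊓ M' := Subgroup.mem_inf.mpr ⟨hxV, hxM'⟩
        rw [hbot, Subgroup.mem_bot] at this
        exact this
      have e : v⁻¹ * h * v = h * (h⁻¹ * (v⁻¹ * h * v)) := by group
      rw [e, hx1, mul_one]
      exact hh
    · -- V ≤ M'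
      have hVle : V ≤ M' := inf_eq_left.mp heq
      have hVM' : NormalIn V M' := ⟨hVle, fun x hx k hk => hVM.2 _ hx _ (hM'M.1 hk)⟩
      obtain ⟨U, hUT, hUV, hUmin⟩ := exists_min_aux (Nat.card V)
        {X : Subgroup G | NormalIn X M' ∧ X ≤ V ∧ X ≠ ⊥} V ⟨hVM', le_rfl, hVbot⟩ le_rfl
      have hUMin : MinIn U M' V := by
        obtain ⟨hUn, hUV', hUb⟩ := hUT
        refine ⟨hUn, hUV', hUb, ?_⟩
        intro X hXn hXle
        by_cases hXb : X = ⊥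
        · exact Or.inl hXb
        · exact Or.inr (hUmin X ⟨hXn, hXle.trans hUV', hXb⟩ hXle)
      set S : Set (Subgroup G) := {X | ∃ m ∈ M, X = conjS m U} with hSdef
      have hUS : U ∈ S := ⟨1, one_mem M, (conjS_one U).symm⟩
      have hSmin : ∀ X ∈ S, MinIn X M' V := by
        rintro X ⟨m, hm, rfl⟩
        exact minIn_conjS hM'M hVM hm hUMin
      have hWV : sSup S ≤ V := sSup_le fun X hX => (hSmin X hX).2.1
      have hWb : sSup S ≠ ⊥ := by
        intro hb
        exact (hSmin U hUS).2.2.1 (le_bot_iff.mp (hb ▸ le_sSup hUS))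
      have hWn : NormalIn (sSup S) M := by
        refine ⟨hWV.trans hVM.1, ?_⟩
        intro w hw k hk
        have hle : sSup S ≤ conjS k⁻¹ (sSup S) := by
          refine sSup_le ?_
          rintro X ⟨m, hm, rfl⟩
          have h1 : conjS (m * k) U ≤ sSup S := le_sSup ⟨m * k, mul_mem hm hk, rfl⟩
          have h2 := conjS_mono k⁻¹ h1
          rwa [conjS_conjS, show m * k * k⁻¹ = m by group] at h2
        have h3 := hle hw
        rw [mem_conjS, inv_inv] at h3
        exact h3
      rcases hmin _ hWn hWV with hb | hWVeq
      · exact absurd hb hWb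
      · have hnorm : sSup S ≤ Subgroup.normalizer (H : Set G) := by
          refine sSup_le ?_
          intro X hX
          have hXall : ∀ u ∈ X, ∀ h' ∈ H, u⁻¹ * h' * u ∈ H :=
            ih M' X H (hSmin X hX).1 (hSmin X hX).2.2.2 hcM'
          intro u hu
          rw [Subgroup.mem_normalizer_iff]
          intro y
          constructor
          · intro hy
            have h1 := hXall u⁻¹ (inv_mem hu) y hy
            rwa [inv_inv] at h1
          · intro hy
            have h1 := hXall u hu _ hy
            have e : u⁻¹ * (u * y * u⁻¹) * u = y := by group
            rwa [e] at h1
        have hv' : v ∈ sSup S := by rw [hWVeq]; exact hv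
        have hvN : v ∈ Subgroup.normalizer (H : Set G) := hnorm hv'
        have hiff := Subgroup.mem_normalizer_iff.mp (inv_mem hvN) h
        rw [inv_inv] at hiff
        exact hiff.mp hh

lemma normalIn_top_top : NormalIn (⊤ : Subgroup G) ⊤ :=
  ⟨le_rfl, fun _ _ _ _ => Subgroup.mem_top _⟩

/-- Main induction on the order of `G`. -/
lemma key : ∀ (N : ℕ) (G : Type*) [Group G] [Finite G] (H K : Subgroup G),
    Nat.card G ≤ N → IsSubnormal H → IsSubnormal K → IsSubnormal (H ⊔ K) := by
  intro N
  induction N with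
  | zero =>
    intro G _ _ H K hcard _ _
    have : 0 < Nat.card G := Nat.card_pos
    omega
  | succ N ih =>
    intro G _ _ H K hcard h₁ h₂
    by_cases hJ : H ⊔ K = ⊤
    · rw [hJ]; exact isSubnormal_top
    have hnt : Nontrivial G := by
      rcases subsingleton_or_nontrivial G with hs | hn
      · refine absurd ?_ hJ
        ext x
        rw [Subsingleton.elim x 1]
        simp only [Subgroup.mem_top, iff_true]
        exact one_mem _
      · exact hn
    -- a minimal normal subgroup V of G
    obtain ⟨V, hVT, -, hVmin⟩ := exists_min_aux (Nat.card (⊤ : Subgroup G))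
      {X : Subgroup G | NormalIn X ⊤ ∧ X ≠ ⊥} ⊤
      ⟨normalIn_top_top, by
        intro htb
        obtain ⟨x, hx⟩ := exists_ne (1 : G)
        apply hx
        have hxm : x ∈ (⊥ : Subgroup G) := htb ▸ Subgroup.mem_top x
        simpa using hxm⟩ le_rfl
    obtain ⟨hV, hVb⟩ := hVT
    have hminV : ∀ W : Subgroup G, NormalIn W ⊤ → W ≤ V → W = ⊥ ∨ W = V := by
      intro W hWn hWle
      by_cases hb : W = ⊥
      · exact Or.inl hb
      · exact Or.inr (hVmin W ⟨hWn, hb⟩ hWle)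
    obtain ⟨n₁, hcH⟩ := isSubnormal_iff.mp h₁
    obtain ⟨n₂, hcK⟩ := isSubnormal_iff.mp h₂
    have hAH : ∀ v ∈ V, ∀ h ∈ H, v⁻¹ * h * v ∈ H := lemA n₁ ⊤ V H hV hminV hcH
    have hAK : ∀ v ∈ V, ∀ h ∈ K, v⁻¹ * h * v ∈ K := lemA n₂ ⊤ V K hV hminV hcK
    -- V normalizes H ⊔ K
    have hconj : ∀ v ∈ V, ∀ x ∈ H ⊔ K, v * x * v⁻¹ ∈ H ⊔ K := by
      intro v hv
      have hsub : H ⊔ K ≤ conjS v (H ⊔ K) := by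
        refine sup_le ?_ ?_
        · intro y hy
          rw [mem_conjS]
          have h1 := hAH v⁻¹ (inv_mem hv) y hy
          rw [inv_inv] at h1
          exact (le_sup_left : H ≤ H ⊔ K) h1
        · intro y hy
          rw [mem_conjS]
          have h1 := hAK v⁻¹ (inv_mem hv) y hy
          rw [inv_inv] at h1
          exact (le_sup_right : K ≤ H ⊔ K) h1
      intro x hx
      have h1 := hsub hx
      rwa [mem_conjS] at h1
    have hVnormalizer : V ≤ Subgroup.normalizer ((H ⊔ K : Subgroup G) : Set G) := by
      intro v hv
      rw [Subgroup.mem_normalizer_iff]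
      intro y
      constructor
      · exact fun hy => hconj v hv y hy
      · intro hy
        have h1 := hconj v⁻¹ (inv_mem hv) _ hy
        have e : v⁻¹ * (v * y * v⁻¹) * v⁻¹⁻¹ = y := by group
        rwa [e] at h1
    have hnormIn : NormalIn (H ⊔ K) ((H ⊔ K) ⊔ V) := by
      refine ⟨le_sup_left, ?_⟩
      intro x hx k hk
      have hkN : k ∈ Subgroup.normalizer ((H ⊔ K : Subgroup G) : Set G) :=
        (sup_le Subgroup.le_normalizer hVnormalizer) hk
      have hiff := Subgroup.mem_normalizer_iff.mp (inv_mem hkN) x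
      rw [inv_inv] at hiff
      exact hiff.mp hx
    -- pass to the quotient G ⧸ V
    have hVnormal : V.Normal := by
      refine ⟨fun x hx g => ?_⟩
      have h1 := hV.2 x hx g⁻¹ (Subgroup.mem_top _)
      rwa [inv_inv] at h1
    have hcardlt : Nat.card (G ⧸ V) < Nat.card G := by
      have h1 : Nat.card G = Nat.card (G ⧸ V) * Nat.card V :=
        Subgroup.card_eq_card_quotient_mul_card_subgroup V
      have h2 : 1 < Nat.card V := (Subgroup.one_lt_card_iff_ne_bot V).mpr hVb
      have h3 : 0 < Nat.card (G ⧸ V) := Nat.card_pos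
      nlinarith
    have hH' : IsSubnormal (H.map (QuotientGroup.mk' V)) := by
      refine isSubnormal_iff.mpr ⟨n₁, ?_⟩
      have h1 := SNChain.map (QuotientGroup.mk' V) hcH
      rwa [Subgroup.map_top_of_surjective _ (QuotientGroup.mk'_surjective V)] at h1
    have hK' : IsSubnormal (K.map (QuotientGroup.mk' V)) := by
      refine isSubnormal_iff.mpr ⟨n₂, ?_⟩
      have h1 := SNChain.map (QuotientGroup.mk' V) hcK
      rwa [Subgroup.map_top_of_surjective _ (QuotientGroup.mk'_surjective V)] at h1
    have hQ : IsSubnormal (H.map (QuotientGroup.mk' V) ⊔ K.map (QuotientGroup.mk' V)) :=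
      ih (G ⧸ V) _ _ (by omega) hH' hK'
    obtain ⟨m, hcm⟩ := isSubnormal_iff.mp hQ
    have hcomap := SNChain.comap (QuotientGroup.mk' V) hcm
    rw [Subgroup.comap_top, ← Subgroup.map_sup, Subgroup.comap_map_eq,
      QuotientGroup.ker_mk'] at hcomap
    exact isSubnormal_iff.mpr ⟨m + 1, SNChain.prepend hnormIn hcomap⟩

end Wielandt

/-- **Wielandt's theorem**: in a finite group, the subgroup generated by two
subnormal subgroups is subnormal. -/
theorem wielandt_join_subnormal {G : Type*} [Group G] [Finite G]
    (H₁ H₂ : Subgroup G) (h₁ : IsSubnormal H₁) (h₂ : IsSubnormal H₂) :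
    IsSubnormal (H₁ ⊔ H₂) :=
  Wielandt.key (Nat.card G) G H₁ H₂ le_rfl h₁ h₂
end

section
/- Let p be a prime, G a finite group, S a Sylow p-subgroup of G, and let M and N be normal subgroups of G. Then SM ∩ SN = S(M ∩ N); that is, the intersection of the subgroups SM and SN equals the subgroup S(M ∩ N). -/
open scoped Pointwise

lemma aux_pow_mem {p : ℕ} [Fact p.Prime] {G : Type*} [Group G]
    (S : Sylow p G) (M : Subgroup G) (hM : M.Normal) {g : G} (hg : g ∈ (S : Subgroup G) ⊔ M) :
    ∃ a : ℕ, g ^ p ^ a ∈ M := by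
  haveI := hM
  let f := QuotientGroup.mk' M
  have hmap : ((S : Subgroup G) ⊔ M).map f = (S : Subgroup G).map f := by
    rw [Subgroup.map_sup]
    have : M.map f = ⊥ := by
      rw [Subgroup.map_eq_bot_iff, QuotientGroup.ker_mk']
    rw [this, sup_bot_eq]
  have hfg : f g ∈ (S : Subgroup G).map f := hmap ▸ Subgroup.mem_map_of_mem f hg
  have hpg : IsPGroup p ((S : Subgroup G).map f) := S.isPGroup'.map f
  obtain ⟨a, ha⟩ := hpg ⟨f g, hfg⟩
  refine ⟨a, ?_⟩
  have : f (g ^ p ^ a) = 1 := by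
    have := congrArg (Subtype.val) ha
    push_cast at this
    simpa using this
  rwa [← QuotientGroup.ker_mk' M, MonoidHom.mem_ker]

/-- If `M`, `N` are normal subgroups of a finite group `G` and `S` is a Sylow
`p`-subgroup of `G`, then `SM ∩ SN = S(M ∩ N)` (as sets of elements of `G`,
where `SM = {sm : s ∈ S, m ∈ M}` etc.). -/
theorem inter_mul_normal {p : ℕ} [Fact p.Prime] {G : Type*} [Group G] [Finite G]
    (S : Sylow p G) (M N : Subgroup G) (hM : M.Normal) (hN : N.Normal) :
    (((S : Subgroup G) : Set G) * (M : Set G)) ∩ (((S : Subgroup G) : Set G) * (N : Set G)) =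
      ((S : Subgroup G) : Set G) * ((M ⊓ N : Subgroup G) : Set G) := by
  haveI := hM; haveI := hN
  haveI : (M ⊓ N).Normal := Subgroup.normal_inf_normal M N
  set K : Subgroup G := ((S : Subgroup G) ⊔ M) ⊓ ((S : Subgroup G) ⊔ N) with hK
  set L : Subgroup G := (S : Subgroup G) ⊔ (M ⊓ N) with hL
  have hLK : L ≤ K := sup_le (le_inf le_sup_left le_sup_left)
    (le_inf ((inf_le_left).trans le_sup_right) ((inf_le_right).trans le_sup_right))
  have hSK : (S : Subgroup G) ≤ K := le_inf le_sup_left le_sup_left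
  -- the quotient K / (M ⊓ N ∩ K) is a p-group
  have hpq : IsPGroup p (K ⧸ ((M ⊓ N).subgroupOf K)) := by
    intro q
    induction q using QuotientGroup.induction_on with
    | H k =>
      obtain ⟨a, ha⟩ := aux_pow_mem S M hM (k.2.1 : (k : G) ∈ (S : Subgroup G) ⊔ M)
      obtain ⟨b, hb⟩ := aux_pow_mem S N hN (k.2.2 : (k : G) ∈ (S : Subgroup G) ⊔ N)
      refine ⟨a + b, ?_⟩
      rw [← QuotientGroup.mk_pow, QuotientGroup.eq_one_iff]
      constructor
      · show ((k : G)) ^ p ^ (a + b) ∈ M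
        rw [pow_add, pow_mul]
        exact M.pow_mem ha _
      · show ((k : G)) ^ p ^ (a + b) ∈ N
        rw [add_comm, pow_add, pow_mul]
        exact N.pow_mem hb _
  -- hence the relative index of M ⊓ N in K is a power of p
  obtain ⟨e, he⟩ := hpq.exists_card_eq
  have hrel : (M ⊓ N).relIndex K = p ^ e := by
    rw [Subgroup.relIndex, Subgroup.index_eq_card, he]
  -- relIndex of L in K divides p ^ e
  have h1 : L.relIndex K ∣ p ^ e := by
    rw [← hrel]
    exact Subgroup.relIndex_dvd_of_le_left K le_sup_right
  -- relIndex of L in K divides S.index, coprime to p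
  have h2 : L.relIndex K ∣ (S : Subgroup G).index :=
    (Subgroup.relIndex_dvd_of_le_left K le_sup_left).trans
      (Subgroup.relIndex_dvd_index_of_le hSK)
  have hnd : ¬ p ∣ (S : Subgroup G).index := S.not_dvd_index
  obtain ⟨k, hk, hLrel⟩ := (Nat.dvd_prime_pow (Fact.out : p.Prime)).mp h1
  have hk0 : k = 0 := by
    by_contra hk0
    exact hnd (dvd_trans (dvd_pow_self p hk0) (hLrel ▸ h2))
  have hone : L.relIndex K = 1 := by rw [hLrel, hk0, pow_zero]
  have hKL : K ≤ L := Subgroup.relIndex_eq_one.mp hone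
  have hKeq : ((S : Subgroup G) ⊔ M) ⊓ ((S : Subgroup G) ⊔ N) = (S : Subgroup G) ⊔ (M ⊓ N) :=
    le_antisymm hKL hLK
  rw [← Subgroup.mul_normal, ← Subgroup.mul_normal, ← Subgroup.mul_normal,
    ← Subgroup.coe_inf, hKeq]
end

section
/- Let p be a prime, G a finite group, S a Sylow p-subgroup of G, N a normal subgroup of G, and set T := S ∩ N. Then for every g ∈ G there exist n ∈ N and f ∈ N_G(T) such that g = nf and S_g = S_{(n,f)}, where S_g := {s ∈ S : s^g ∈ S} and S_{(n,f)} := {s ∈ S : s^n ∈ S and s^{nf} ∈ S}. -/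
open Subgroup Pointwise

/-- A splitting lemma: if `N ⊴ G`, `S ∈ Syl_p(G)` and `T := S ∩ N`, then every
`g ∈ G` can be written as `g = nf` with `n ∈ N` and `f ∈ N_G(T)` such that
`S_g = S_{(n,f)}`, where `S_g = {s ∈ S : s^g ∈ S}` and
`S_{(n,f)} = {s ∈ S : s^n ∈ S and (s^n)^f ∈ S}` (with `s^g = g⁻¹sg`). -/
theorem splitting_lemma {p : ℕ} [Fact p.Prime] {G : Type*} [Group G] [Finite G]
    (S : Sylow p G) (N : Subgroup G) (hN : N.Normal) (g : G) :
    ∃ n ∈ N, ∃ f ∈ Subgroup.normalizer (((S : Subgroup G) ⊓ N : Subgroup G) : Set G),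
      g = n * f ∧
        {s : G | s ∈ (S : Subgroup G) ∧ g⁻¹ * s * g ∈ (S : Subgroup G)} =
          {s : G | s ∈ (S : Subgroup G) ∧ n⁻¹ * s * n ∈ (S : Subgroup G) ∧
            f⁻¹ * (n⁻¹ * s * n) * f ∈ (S : Subgroup G)} := by
  classical
  -- `K = S ⊔ N = SN`, `Sg = gSg⁻¹`, `R = gSg⁻¹ ⊓ K`
  set K : Subgroup G := (S : Subgroup G) ⊔ N with hK
  set Sg : Subgroup G := Subgroup.map (MulAut.conj g).toMonoidHom (S : Subgroup G) with hSg
  set R : Subgroup G := Sg ⊓ K with hRdef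
  have hSK : (S : Subgroup G) ≤ K := le_sup_left
  have hNK : N ≤ K := le_sup_right
  have hR : IsPGroup p R := ((S.isPGroup').map _).to_le inf_le_left
  have hRK : R ≤ K := inf_le_right
  -- `S` as a Sylow subgroup of `K`
  let SK : Sylow p K := S.subtype hSK
  -- conjugate `R` into `S` by an element of `K`
  have hR' : IsPGroup p (R.subgroupOf K) := hR.comap_subtype
  obtain ⟨Q, hRQ⟩ := hR'.exists_le_sylow
  obtain ⟨k, hk⟩ := MulAction.exists_smul_eq K Q SK
  have hkconj : ∀ x : G, x ∈ R → (k : G) * x * (k : G)⁻¹ ∈ (S : Subgroup G) := by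
    intro x hx
    have hxK : x ∈ K := hRK hx
    have hxQ : (⟨x, hxK⟩ : K) ∈ Q := hRQ (by simpa [Subgroup.mem_subgroupOf] using hx)
    have : k * (⟨x, hxK⟩ : K) * k⁻¹ ∈ (SK : Subgroup K) := by
      rw [← hk]
      exact ⟨⟨x, hxK⟩, hxQ, rfl⟩
    rw [Sylow.coe_subtype, Subgroup.mem_subgroupOf] at this
    simpa using this
  -- write `k⁻¹ = n * s` with `n ∈ N`, `s ∈ S`
  have hkK : ((k : G))⁻¹ ∈ N ⊔ (S : Subgroup G) := by
    have h : ((k : G))⁻¹ ∈ (S : Subgroup G) ⊔ N := K.inv_mem k.2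
    rwa [sup_comm] at h
  rw [← SetLike.mem_coe, Subgroup.normal_mul] at hkK
  obtain ⟨n, hn, s, hs, hns⟩ := hkK
  -- key property: conjugation by `n⁻¹` sends `R` into `S`
  have key : ∀ x : G, x ∈ R → n⁻¹ * x * n ∈ (S : Subgroup G) := by
    intro x hx
    have h1 := hkconj x hx
    have hmem : s * ((k : G) * x * (k : G)⁻¹) * s⁻¹ ∈ (S : Subgroup G) :=
      (S : Subgroup G).mul_mem ((S : Subgroup G).mul_mem hs h1) ((S : Subgroup G).inv_mem hs)
    have harith : s * ((k : G) * x * (k : G)⁻¹) * s⁻¹ = n⁻¹ * x * n := by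
      have hns' : n * s = ((k : G))⁻¹ := hns
      have hks : (k : G) = s⁻¹ * n⁻¹ := by
        rw [← inv_inv (k : G), ← hns']; group
      rw [hks]; group
    rwa [harith] at hmem
  -- elements of `S_g` lie in `R`
  have memR : ∀ x : G, x ∈ (S : Subgroup G) → g⁻¹ * x * g ∈ (S : Subgroup G) → x ∈ R := by
    intro x hx hxg
    refine ⟨⟨g⁻¹ * x * g, hxg, ?_⟩, hSK hx⟩
    simp [MulAut.conj]
    group
  -- `gTg⁻¹ ⊆ R`
  have memRT : ∀ t : G, t ∈ (S : Subgroup G) ⊓ N → g * t * g⁻¹ ∈ R := by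
    rintro t ⟨htS, htN⟩
    refine ⟨⟨t, htS, rfl⟩, hNK (hN.conj_mem t htN g)⟩
  refine ⟨n, hn, n⁻¹ * g, ?_, by group, ?_⟩
  · -- `f = n⁻¹g` normalizes `T = S ⊓ N`
    refine Subgroup.mem_normalizer_fintype ?_
    intro t ht
    have ht' : t ∈ (S : Subgroup G) ⊓ N := ht
    have h1 : g * t * g⁻¹ ∈ R := memRT t ht'
    have h2 : n⁻¹ * (g * t * g⁻¹) * n ∈ (S : Subgroup G) := key _ h1
    have h3 : n⁻¹ * (g * t * g⁻¹) * n ∈ N := by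
      simpa using hN.conj_mem _ (hN.conj_mem t ht'.2 g) n⁻¹
    have harith : n⁻¹ * g * t * (n⁻¹ * g)⁻¹ = n⁻¹ * (g * t * g⁻¹) * n := by group
    show n⁻¹ * g * t * (n⁻¹ * g)⁻¹ ∈ ((S : Subgroup G) ⊓ N : Subgroup G)
    rw [harith]
    exact ⟨h2, h3⟩
  · -- the two fusion sets coincide
    ext x
    simp only [Set.mem_setOf_eq]
    have harith : ∀ y : G, (n⁻¹ * g)⁻¹ * (n⁻¹ * y * n) * (n⁻¹ * g) = g⁻¹ * y * g := by
      intro y; group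
    constructor
    · rintro ⟨hx, hxg⟩
      have hxR : x ∈ R := memR x hx hxg
      refine ⟨hx, key x hxR, ?_⟩
      rw [harith]; exact hxg
    · rintro ⟨hx, -, h2⟩
      rw [harith] at h2
      exact ⟨hx, h2⟩
end

section
/- Let p be a prime, G a finite group, S a Sylow p-subgroup of G, and let M and N be normal subgroups of G. Then for every g ∈ MN there exist m ∈ M and n ∈ N such that g = mn and S_g = S_{(m,n)}, where S_g := {s ∈ S : s^g ∈ S} and S_{(m,n)} := {s ∈ S : s^m ∈ S and s^{mn} ∈ S}. -/
open scoped Pointwise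

/-- A `p`-subgroup contained in `S ⊔ W` with `W` normal can be conjugated into the
Sylow `p`-subgroup `S` by an element of `W`. -/
lemma aux_conj_into_sylow {p : ℕ} [Fact p.Prime] {G : Type*} [Group G] [Finite G]
    (S : Sylow p G) (W : Subgroup G) [W.Normal] (P : Subgroup G) (hP : IsPGroup p P)
    (hle : P ≤ (S : Subgroup G) ⊔ W) :
    ∃ z ∈ W, ∀ x ∈ P, z⁻¹ * x * z ∈ (S : Subgroup G) := by
  set H : Subgroup G := (S : Subgroup G) ⊔ W with hH
  have hSH : (S : Subgroup G) ≤ H := le_sup_left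
  -- S as a Sylow subgroup of H
  let S' : Sylow p H := S.subtype hSH
  have hP' : IsPGroup p (P.subgroupOf H) := hP.comap_subtype
  obtain ⟨Q, hPQ⟩ := hP'.exists_le_sylow
  obtain ⟨h, rfl⟩ := MulAction.exists_smul_eq H S' Q
  -- decompose h = w * s with w ∈ W, s ∈ S
  have hmem : (h : G) ∈ (W : Set G) * ((S : Subgroup G) : Set G) := by
    have h1 : (h : G) ∈ (↑(W ⊔ (S : Subgroup G)) : Set G) := by
      rw [sup_comm]; exact h.2
    rwa [Subgroup.normal_mul] at h1
  obtain ⟨w, hw, s, hs, hws⟩ := hmem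
  refine ⟨w, hw, fun x hx => ?_⟩
  have hxH : x ∈ H := hle hx
  have hxQ : (⟨x, hxH⟩ : H) ∈ (h • S' : Sylow p H) := hPQ (by
    simpa [Subgroup.mem_subgroupOf] using hx)
  have hconj : h⁻¹ * (⟨x, hxH⟩ : H) * h ∈ (S' : Subgroup H) := by
    have hxQ' : (⟨x, hxH⟩ : H) ∈ MulAut.conj h • (S' : Subgroup H) := hxQ
    rw [Subgroup.mem_pointwise_smul_iff_inv_smul_mem] at hxQ'
    simpa [MulAut.smul_def] using hxQ'
  have hconjG : ((h : G))⁻¹ * x * h ∈ (S : Subgroup G) := by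
    rw [Sylow.coe_subtype, Subgroup.mem_subgroupOf] at hconj
    simpa using hconj
  rw [← hws] at hconjG
  -- (w s)⁻¹ x (w s) ∈ S  ⟹  w⁻¹ x w = s * ((ws)⁻¹ x (ws)) * s⁻¹ ∈ S
  have : w⁻¹ * x * w = s * ((w * s)⁻¹ * x * (w * s)) * s⁻¹ := by group
  rw [this]
  exact Subgroup.mul_mem _ (Subgroup.mul_mem _ hs hconjG) (Subgroup.inv_mem _ hs)

/-- Key lemma: `M ⊓ (S ⊔ N) ≤ S ⊔ (M ⊓ N)` for `M`, `N` normal and `S` a Sylow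
`p`-subgroup. -/
lemma aux_inf_sup_le {p : ℕ} [Fact p.Prime] {G : Type*} [Group G] [Finite G]
    (S : Sylow p G) (M N : Subgroup G) [hM : M.Normal] [hN : N.Normal] :
    M ⊓ ((S : Subgroup G) ⊔ N) ≤ (S : Subgroup G) ⊔ (M ⊓ N) := by
  classical
  set SG : Subgroup G := (S : Subgroup G) with hSG
  set K : Subgroup G := M ⊓ (SG ⊔ N) with hK
  set W : Subgroup G := M ⊓ N with hW
  haveI hWn : W.Normal := ⟨fun n hn g => ⟨hM.conj_mem n hn.1 g, hN.conj_mem n hn.2 g⟩⟩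
  have hWK : W ≤ K := le_inf inf_le_left (le_trans inf_le_right le_sup_right)
  -- Pick a Sylow p-subgroup of K and push it into G
  obtain ⟨R₀⟩ : Nonempty (Sylow p K) := inferInstance
  set P₀ : Subgroup G := (R₀ : Subgroup K).map K.subtype with hP₀
  have hP₀p : IsPGroup p P₀ := R₀.2.map K.subtype
  have hP₀K : P₀ ≤ K := by
    rintro x ⟨y, hy, rfl⟩; exact y.2
  have hP₀le : P₀ ≤ SG ⊔ N := le_trans hP₀K inf_le_right
  obtain ⟨z, hzN, hz⟩ := aux_conj_into_sylow S N P₀ hP₀p hP₀le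
  set f : G →* G := (MulAut.conj z⁻¹).toMonoidHom with hf
  set R₁ : Subgroup G := P₀.map f with hR₁
  have hfx : ∀ x : G, f x = z⁻¹ * x * z := by
    intro x; simp [hf, MulAut.conj_apply, mul_assoc]
  have hR₁S : R₁ ≤ SG := by
    rintro x ⟨y, hy, rfl⟩
    rw [hfx]
    exact hz y hy
  have hR₁K : R₁ ≤ K := by
    rintro x ⟨y, hy, rfl⟩
    rw [hfx]
    have hyK : y ∈ K := hP₀K hy
    refine ⟨?_, ?_⟩
    · -- in M
      have : z⁻¹ * y * z = z⁻¹ * y * (z⁻¹)⁻¹ := by group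
      rw [this]
      exact hM.conj_mem y hyK.1 z⁻¹
    · -- in SG ⊔ N
      have hzSN : z ∈ SG ⊔ N := Subgroup.mem_sup_right hzN
      exact Subgroup.mul_mem _ (Subgroup.mul_mem _ (Subgroup.inv_mem _ hzSN) hyK.2) hzSN
  -- cardinalities : R₁ has the same cardinality as R₀
  have hcard1 : Nat.card R₁ = Nat.card P₀ :=
    (Nat.card_congr (P₀.equivMapOfInjective f (MulEquiv.injective _)).toEquiv).symm
  have hcard0 : Nat.card P₀ = Nat.card (R₀ : Subgroup K) :=
    (Nat.card_congr ((R₀ : Subgroup K).equivMapOfInjective K.subtype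
      K.subtype_injective).toEquiv).symm
  have hcardR : Nat.card (R₁.subgroupOf K) = Nat.card (R₀ : Subgroup K) := by
    rw [Nat.card_congr (Subgroup.subgroupOfEquivOfLe hR₁K).toEquiv, hcard1, hcard0]
  -- index of R₁ in K equals index of R₀, hence is not divisible by p
  have hidx : (R₁.subgroupOf K).index = (R₀ : Subgroup K).index := by
    have h1 := Subgroup.card_mul_index (R₁.subgroupOf K)
    have h2 := Subgroup.card_mul_index (R₀ : Subgroup K)
    rw [hcardR] at h1
    have hpos : 0 < Nat.card (R₀ : Subgroup K) := Nat.card_pos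
    exact Nat.eq_of_mul_eq_mul_left hpos (h1.trans h2.symm)
  have hndvd : ¬ p ∣ (R₁.subgroupOf K).index := by
    rw [hidx]; exact R₀.not_dvd_index
  -- K / W is a p-group
  haveI hNn' : (N.subgroupOf (SG ⊔ N)).Normal := hN.subgroupOf _
  have hKle : K ≤ SG ⊔ N := inf_le_right
  set φ : K →* (SG ⊔ N : Subgroup G) ⧸ N.subgroupOf (SG ⊔ N) :=
    (QuotientGroup.mk' (N.subgroupOf (SG ⊔ N))).comp (Subgroup.inclusion hKle) with hφ
  have htarget : IsPGroup p ((SG ⊔ N : Subgroup G) ⧸ N.subgroupOf (SG ⊔ N)) := by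
    have hsurj : Function.Surjective
        ((QuotientGroup.mk' (N.subgroupOf (SG ⊔ N))).comp
          (Subgroup.inclusion (le_sup_left : SG ≤ SG ⊔ N))) := by
      intro q
      obtain ⟨h, rfl⟩ := QuotientGroup.mk'_surjective (N.subgroupOf (SG ⊔ N)) q
      have hmem : (h : G) ∈ (↑SG : Set G) * (↑N : Set G) := by
        have h1 : (h : G) ∈ (↑(SG ⊔ N) : Set G) := h.2
        rwa [Subgroup.mul_normal] at h1
      obtain ⟨s, hs, n, hn, hsn⟩ := hmem
      refine ⟨⟨s, hs⟩, ?_⟩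
      simp only [MonoidHom.comp_apply, QuotientGroup.mk'_apply]
      rw [QuotientGroup.eq]
      rw [Subgroup.mem_subgroupOf]
      show s⁻¹ * (h : G) ∈ N
      rw [← hsn]
      simpa using hn
    exact IsPGroup.of_surjective S.2 _ hsurj
  have hker : W.subgroupOf K = φ.ker := by
    ext x
    simp only [Subgroup.mem_subgroupOf, MonoidHom.mem_ker]
    have h1 : φ x = QuotientGroup.mk' (N.subgroupOf (SG ⊔ N)) (Subgroup.inclusion hKle x) := rfl
    rw [h1, QuotientGroup.mk'_apply, QuotientGroup.eq_one_iff, Subgroup.mem_subgroupOf]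
    have h2 : ((Subgroup.inclusion hKle x : (SG ⊔ N : Subgroup G)) : G) = (x : G) := rfl
    rw [h2]
    exact ⟨fun hx => hx.2, fun hx => ⟨x.2.1, hx⟩⟩
  haveI hWnK : (W.subgroupOf K).Normal := hWn.subgroupOf K
  have hquot : IsPGroup p (K ⧸ W.subgroupOf K) := by
    have hrange : IsPGroup p φ.range := htarget.to_subgroup φ.range
    have hq2 : IsPGroup p (K ⧸ φ.ker) :=
      hrange.of_equiv (QuotientGroup.quotientKerEquivRange φ).symm
    exact hq2.of_equiv (QuotientGroup.quotientMulEquivOfEq hker).symm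
  -- index argument: K ≤ R₁ ⊔ W
  set J : Subgroup G := R₁ ⊔ W with hJ
  have hJK : K ≤ J := by
    rw [← Subgroup.relIndex_eq_one]
    have hd1 : J.relIndex K ∣ (R₁.subgroupOf K).index :=
      Subgroup.relIndex_dvd_of_le_left K le_sup_left
    have hd2 : J.relIndex K ∣ W.relIndex K :=
      Subgroup.relIndex_dvd_of_le_left K le_sup_right
    obtain ⟨i, hi⟩ := hquot.exists_card_eq
    have hb : W.relIndex K = p ^ i := by
      rw [Subgroup.relIndex, Subgroup.index, ← hi]
    rw [hb] at hd2
    have hcop : Nat.Coprime (J.relIndex K) p := by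
      rw [Nat.coprime_comm, (Fact.out : p.Prime).coprime_iff_not_dvd]
      exact fun hpd => hndvd (dvd_trans hpd hd1)
    exact Nat.Coprime.eq_one_of_dvd (hcop.pow_right i) hd2
  have hJle : J ≤ SG ⊔ W := sup_le (le_trans hR₁S le_sup_left) le_sup_right
  exact le_trans hJK hJle

/-- If `M`, `N` are normal subgroups of a finite group `G` and `S ∈ Syl_p(G)`,
then every `g ∈ MN` can be written as `g = mn` with `m ∈ M`, `n ∈ N` and
`S_g = S_{(m,n)}`, where `S_g = {s ∈ S : s^g ∈ S}` and
`S_{(m,n)} = {s ∈ S : s^m ∈ S and (s^m)^n ∈ S}` (with `s^g = g⁻¹sg`). -/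
theorem product_normal_splitting {p : ℕ} [Fact p.Prime] {G : Type*} [Group G] [Finite G]
    (S : Sylow p G) (M N : Subgroup G) (hM : M.Normal) (hN : N.Normal)
    (g : G) (hg : g ∈ (M : Set G) * (N : Set G)) :
    ∃ m ∈ M, ∃ n ∈ N,
      g = m * n ∧
        {s : G | s ∈ (S : Subgroup G) ∧ g⁻¹ * s * g ∈ (S : Subgroup G)} =
          {s : G | s ∈ (S : Subgroup G) ∧ m⁻¹ * s * m ∈ (S : Subgroup G) ∧
            n⁻¹ * (m⁻¹ * s * m) * n ∈ (S : Subgroup G)} := by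
  classical
  haveI := hM; haveI := hN
  obtain ⟨m₀, hm₀, n₀, hn₀, hmn₀⟩ := hg
  set SG : Subgroup G := (S : Subgroup G) with hSG
  -- T = S ∩ S^{g⁻¹}, i.e. {s ∈ S : g⁻¹ s g ∈ S}
  set T : Subgroup G := SG ⊓ SG.comap (MulAut.conj g⁻¹).toMonoidHom with hT
  have hmemT : ∀ s : G, s ∈ T ↔ s ∈ SG ∧ g⁻¹ * s * g ∈ SG := by
    intro s
    rw [hT, Subgroup.mem_inf, Subgroup.mem_comap]
    have : (MulAut.conj g⁻¹).toMonoidHom s = g⁻¹ * s * g := by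
      simp [MulAut.conj_apply]
    rw [this]
  have hTp : IsPGroup p T := S.2.to_le inf_le_left
  -- P = T^{m₀}
  set c : G →* G := (MulAut.conj m₀⁻¹).toMonoidHom with hc
  have hcx : ∀ x : G, c x = m₀⁻¹ * x * m₀ := by
    intro x; simp [hc, MulAut.conj_apply, mul_assoc]
  set P : Subgroup G := T.map c with hP
  have hPp : IsPGroup p P := hTp.map c
  -- P ≤ (S ⊔ M) ⊓ (S ⊔ N)
  have hPle : P ≤ SG ⊔ (M ⊓ N) := by
    have h1 : P ≤ (SG ⊔ M) ⊓ (SG ⊔ N) := by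
      rintro x ⟨t, ht, rfl⟩
      rw [hcx]
      obtain ⟨htS, htg⟩ := (hmemT t).mp ht
      constructor
      · -- in S ⊔ M : m₀⁻¹ t m₀ = t * (t⁻¹ m₀⁻¹ t m₀)
        have heq : m₀⁻¹ * t * m₀ = t * ((t⁻¹ * m₀⁻¹ * (t⁻¹)⁻¹) * m₀) := by group
        rw [heq]
        refine Subgroup.mul_mem _ (Subgroup.mem_sup_left htS) ?_
        exact Subgroup.mem_sup_right (M.mul_mem (hM.conj_mem m₀⁻¹ (M.inv_mem hm₀) t⁻¹) hm₀)
      · -- in S ⊔ N : m₀⁻¹ t m₀ = u * (u⁻¹ n₀ u n₀⁻¹) with u = g⁻¹ t g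
        set u : G := g⁻¹ * t * g with hu
        have heq : m₀⁻¹ * t * m₀ = u * ((u⁻¹ * n₀ * (u⁻¹)⁻¹) * n₀⁻¹) := by
          rw [hu, ← hmn₀]; group
        rw [heq]
        refine Subgroup.mul_mem _ (Subgroup.mem_sup_left htg) ?_
        exact Subgroup.mem_sup_right (N.mul_mem (hN.conj_mem n₀ hn₀ u⁻¹) (N.inv_mem hn₀))
    have h2 : (SG ⊔ M) ⊓ (SG ⊔ N) ≤ SG ⊔ (M ⊓ N) := by
      intro x hx
      obtain ⟨hxM, hxN⟩ := hx
      have hxM' : x ∈ (↑SG : Set G) * (↑M : Set G) := by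
        have h1 : x ∈ (↑(SG ⊔ M) : Set G) := hxM
        rwa [Subgroup.mul_normal] at h1
      obtain ⟨s, hs, mm, hmm, hsm⟩ := hxM'
      have hmmK : mm ∈ M ⊓ (SG ⊔ N) := by
        refine ⟨hmm, ?_⟩
        have : mm = s⁻¹ * x := by rw [← hsm]; group
        rw [this]
        exact Subgroup.mul_mem _ (Subgroup.inv_mem _ (Subgroup.mem_sup_left hs)) hxN
      have hmm' : mm ∈ SG ⊔ (M ⊓ N) := aux_inf_sup_le S M N hmmK
      rw [← hsm]
      exact Subgroup.mul_mem _ (Subgroup.mem_sup_left hs) hmm'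
    exact le_trans h1 h2
  -- conjugate P into S by z ∈ M ⊓ N
  obtain ⟨z, hz, hzP⟩ := aux_conj_into_sylow S (M ⊓ N) P hPp hPle
  refine ⟨m₀ * z, M.mul_mem hm₀ hz.1, z⁻¹ * n₀, N.mul_mem (N.inv_mem hz.2) hn₀, ?_, ?_⟩
  · rw [← hmn₀]; group
  · ext s
    simp only [Set.mem_setOf_eq]
    have hprod : (m₀ * z) * (z⁻¹ * n₀) = g := by rw [← hmn₀]; group
    have hsecond : ∀ y : G, (z⁻¹ * n₀)⁻¹ * ((m₀ * z)⁻¹ * y * (m₀ * z)) * (z⁻¹ * n₀)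
        = g⁻¹ * y * g := by
      intro y; rw [← hmn₀]; group
    constructor
    · rintro ⟨hsS, hsg⟩
      have hsT : s ∈ T := (hmemT s).mpr ⟨hsS, hsg⟩
      have hsP : m₀⁻¹ * s * m₀ ∈ P := by
        rw [hP]
        exact ⟨s, hsT, by rw [hcx]⟩
      have hconj := hzP _ hsP
      have heq : z⁻¹ * (m₀⁻¹ * s * m₀) * z = (m₀ * z)⁻¹ * s * (m₀ * z) := by group
      rw [heq] at hconj
      exact ⟨hsS, hconj, by rw [hsecond s]; exact hsg⟩
    · rintro ⟨hsS, -, h2⟩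
      rw [hsecond s] at h2
      exact ⟨hsS, h2⟩
end

section
/- Let G be a finite group, let H be a subnormal subgroup of G, and let M := ⟨H^G⟩ be the normal closure of H in G. If G = M · N_G(H), then H = M and in particular H is normal in G. -/
open scoped Pointwise

lemma normalIn_top_normal {K : Type*} [Group K] {H : Subgroup K} (h : NormalIn H ⊤) :
    H.Normal := by
  refine ⟨fun n hn g => ?_⟩
  have := h.2 n hn g⁻¹ trivial
  simpa [mul_assoc] using this

lemma key_aux {K : Type*} [Group K] :
    ∀ n (c : Fin (n + 1) → Subgroup K),
      (∀ i : Fin n, NormalIn (c i.castSucc) (c i.succ)) → c (Fin.last n) = ⊤ →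
      Subgroup.normalClosure ((c 0 : Subgroup K) : Set K) = ⊤ → c 0 = ⊤ := by
  intro n
  induction n with
  | zero => intro c _ hl _; simpa [Fin.last] using hl
  | succ n ih =>
    intro c hstep hl hc
    have hle : ∀ j : Fin (n + 2), c 0 ≤ c j := by
      intro j
      induction j using Fin.induction with
      | zero => exact le_rfl
      | succ i ihi => exact le_trans ihi (hstep i).1
    have hnorm : NormalIn (c (Fin.last n).castSucc) ⊤ := by
      have := hstep (Fin.last n)
      rwa [Fin.succ_last, hl] at this
    have hN : (c (Fin.last n).castSucc).Normal := normalIn_top_normal hnorm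
    have htop : c (Fin.last n).castSucc = ⊤ := by
      refine top_le_iff.mp ?_
      rw [← hc]
      exact Subgroup.normalClosure_le_normal (fun x hx => hle _ hx)
    refine ih (fun i => c i.castSucc) (fun i => ?_) ?_ ?_
    · have := hstep i.castSucc
      rwa [Fin.succ_castSucc] at this
    · simpa using htop
    · simpa using hc

/-- If `H` is subnormal in the finite group `G`, `M := ⟨H^G⟩` is its normal
closure and `G = M · N_G(H)`, then `H = M` and in particular `H ⊴ G`. -/
theorem subnormal_of_normalClosure_normalizer {G : Type*} [Group G] [Finite G]
    (H : Subgroup G) (hH : IsSubnormal H)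
    (M : Subgroup G) (hM : M = Subgroup.normalClosure (H : Set G))
    (hfac : (M : Set G) * (Subgroup.normalizer (H : Set G) : Set G) = Set.univ) :
    H = M ∧ H.Normal := by
  have hHM : H ≤ M := hM ▸ Subgroup.le_normalClosure
  set N : Subgroup M := Subgroup.normalClosure ((H.subgroupOf M : Subgroup M) : Set M) with hN
  set R : Subgroup G := Subgroup.map M.subtype N with hR
  have hRM : R ≤ M := by
    rintro x ⟨y, _, rfl⟩
    exact y.2
  have hHR : H ≤ R := by
    intro h hh
    exact ⟨⟨h, hHM hh⟩, Subgroup.le_normalClosure (by simpa [Subgroup.mem_subgroupOf] using hh),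
      rfl⟩
  have hRconj : ∀ m ∈ M, ∀ r ∈ R, m * r * m⁻¹ ∈ R := by
    rintro m hm r ⟨y, hy, rfl⟩
    have : (⟨m, hm⟩ : M) * y * (⟨m, hm⟩ : M)⁻¹ ∈ N :=
      Subgroup.normalClosure_normal.conj_mem y hy ⟨m, hm⟩
    exact ⟨_, this, rfl⟩
  have hMR : M ≤ R := by
    rw [hM]
    show Subgroup.closure (Group.conjugatesOfSet (H : Set G)) ≤ R
    rw [Subgroup.closure_le]
    intro b hb
    obtain ⟨a, ha, hconj⟩ := Group.mem_conjugatesOfSet_iff.mp hb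
    obtain ⟨g, rfl⟩ := isConj_iff.mp hconj
    have hg : g ∈ (M : Set G) * (Subgroup.normalizer (H : Set G) : Set G) := by rw [hfac]; trivial
    obtain ⟨m, hm, x, hx, rfl⟩ := hg
    have hxa : x * a * x⁻¹ ∈ H := (Subgroup.mem_normalizer_iff.mp hx a).mp ha
    have : m * (x * a * x⁻¹) * m⁻¹ ∈ R := hRconj m hm _ (hHR hxa)
    simpa [mul_assoc] using this
  have hRM' : R = M := le_antisymm hRM hMR
  have hNtop : N = ⊤ := by
    rw [eq_top_iff]
    rintro ⟨m, hm⟩ -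
    have : m ∈ R := hRM' ▸ hm
    obtain ⟨y, hy, hym⟩ := this
    have : y = ⟨m, hm⟩ := Subtype.ext hym
    rwa [this] at hy
  -- subnormality transfers to M
  obtain ⟨n, c, h0, hl, hstep⟩ := hH
  have hsub : H.subgroupOf M = ⊤ := by
    rw [← h0]
    refine key_aux n (fun i => (c i).subgroupOf M) (fun i => ?_) ?_ ?_
    · constructor
      · intro x hx
        simp only [Subgroup.mem_subgroupOf] at hx ⊢
        exact (hstep i).1 hx
      · intro h hh k hk
        simp only [Subgroup.mem_subgroupOf] at hh hk ⊢
        exact (hstep i).2 _ hh _ hk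
    · show (c (Fin.last n)).subgroupOf M = ⊤
      rw [hl]; exact Subgroup.top_subgroupOf M
    · show Subgroup.normalClosure (((c 0).subgroupOf M : Subgroup M) : Set M) = ⊤
      rw [h0]; exact hNtop
  have hMH : M ≤ H := by
    intro m hm
    have : (⟨m, hm⟩ : M) ∈ H.subgroupOf M := hsub ▸ Subgroup.mem_top _
    simpa [Subgroup.mem_subgroupOf] using this
  have hHMeq : H = M := le_antisymm hHM hMH
  refine ⟨hHMeq, ?_⟩
  rw [hHMeq, hM]
  exact Subgroup.normalClosure_normal
end

section
/- Let p be a prime, G a finite group, S a Sylow p-subgroup of G, N a normal subgroup of G, and H a subnormal subgroup of G which is normalized by S. Then for every g ∈ NH there exist n ∈ N and h ∈ H such that g = nh and S_g = S_{(n,h)}, where S_g := {s ∈ S : s^g ∈ S} and S_{(n,h)} := {s ∈ S : s^n ∈ S and s^{nh} ∈ S}. -/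
open scoped Pointwise

section Auxiliary

variable {G : Type*} [Group G]

/-- If `S` normalizes `H`, every element of `S ⊔ H` is a product `s * h`. -/
theorem aux_mem_sup_decomp (S H : Subgroup G) (hSH : S ≤ Subgroup.normalizer (H : Set G)) :
    ∀ x ∈ S ⊔ H, ∃ s ∈ S, ∃ h ∈ H, x = s * h := by
  have hconj : ∀ s ∈ S, ∀ h ∈ H, s * h * s⁻¹ ∈ H := by
    intro s hs h hh
    exact (Subgroup.mem_normalizer_iff.mp (hSH hs) h).mp hh
  let K : Subgroup G :=
    { carrier := (S : Set G) * (H : Set G)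
      one_mem' := ⟨1, one_mem S, 1, one_mem H, one_mul 1⟩
      mul_mem' := by
        rintro a b ⟨s₁, hs₁, h₁, hh₁, rfl⟩ ⟨s₂, hs₂, h₂, hh₂, rfl⟩
        refine ⟨s₁ * s₂, mul_mem hs₁ hs₂, (s₂⁻¹ * h₁ * s₂) * h₂,
          mul_mem ?_ hh₂, by group⟩
        simpa using hconj s₂⁻¹ (inv_mem hs₂) h₁ hh₁
      inv_mem' := by
        rintro a ⟨s, hs, h, hh, rfl⟩
        exact ⟨s⁻¹, inv_mem hs, s * h⁻¹ * s⁻¹, hconj s hs h⁻¹ (inv_mem hh), by group⟩ }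
  intro x hx
  have hle : S ⊔ H ≤ K :=
    sup_le (fun s hs => ⟨s, hs, 1, one_mem H, mul_one s⟩)
      (fun h hh => ⟨1, one_mem S, h, hh, one_mul h⟩)
  obtain ⟨s, hs, h, hh, hx⟩ := hle hx
  exact ⟨s, hs, h, hh, hx.symm⟩

/-- If the Sylow subgroup `S` normalizes `V`, then the index of `S ∩ V` in `V`
is prime to `p`. -/
theorem aux_not_dvd_relIndex {p : ℕ} [Fact p.Prime] [Finite G] (S : Sylow p G)
    (V : Subgroup G) (hSV : (S : Subgroup G) ≤ Subgroup.normalizer (V : Set G)) :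
    ¬ p ∣ (S : Subgroup G).relIndex V := by
  haveI : Finite (Sylow p G) :=
    Finite.of_injective (fun P : Sylow p G => (P : Subgroup G))
      (fun P Q h => Sylow.ext h)
  set Z := Subgroup.normalizer (V : Set G) with hZ
  set S' : Subgroup Z := (S : Subgroup G).subgroupOf Z with hS'
  set V' : Subgroup Z := V.subgroupOf Z with hV'
  haveI : V'.Normal := Subgroup.normal_in_normalizer
  have h1 : (S : Subgroup G).relIndex V = S'.relIndex V' :=
    (Subgroup.relIndex_subgroupOf Subgroup.le_normalizer).symm
  set Y : Subgroup Z := S' ⊔ V' with hY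
  have h2 : V'.relIndex S' = V'.relIndex Y :=
    Nat.card_congr (QuotientGroup.quotientInfEquivProdNormalQuotient S' V').toEquiv
  have hchain1 : S'.relIndex V' * V'.relIndex Y = (S' ⊓ V').relIndex Y := by
    rw [← Subgroup.inf_relIndex_right (H := S') (K := V')]
    exact Subgroup.relIndex_mul_relIndex _ _ _ inf_le_right le_sup_right
  have hchain2 : V'.relIndex S' * S'.relIndex Y = (S' ⊓ V').relIndex Y := by
    rw [← Subgroup.inf_relIndex_right (H := V') (K := S'), inf_comm]
    exact Subgroup.relIndex_mul_relIndex _ _ _ inf_le_left le_sup_left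
  have hne : V'.relIndex Y ≠ 0 := Subgroup.index_ne_zero_of_finite
  have key : S'.relIndex V' = S'.relIndex Y := by
    have h3 := hchain1.trans hchain2.symm
    rw [h2] at h3
    exact Nat.eq_of_mul_eq_mul_right (Nat.pos_of_ne_zero hne) (by linarith [h3])
  have hdvd : (S : Subgroup G).relIndex V ∣ (S : Subgroup G).index := by
    rw [h1, key]
    calc S'.relIndex Y ∣ S'.index :=
          Dvd.intro _ (Subgroup.relIndex_mul_index (le_sup_left : S' ≤ Y))
      _ = (S : Subgroup G).relIndex Z := rfl
      _ ∣ (S : Subgroup G).index :=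
          Dvd.intro _ (Subgroup.relIndex_mul_index hSV)
  intro hp
  exact S.not_dvd_index (hp.trans hdvd)

/-- Conjugating a `p`-subgroup of `W` into the Sylow subgroup `S ≤ W` by an
element of `W`. -/
theorem aux_conj {p : ℕ} [Fact p.Prime] [Finite G] (S : Sylow p G) (W F : Subgroup G)
    (hSW : (S : Subgroup G) ≤ W) (hFW : F ≤ W) (hF : IsPGroup p F) :
    ∃ w ∈ W, ∀ x ∈ F, w * x * w⁻¹ ∈ (S : Subgroup G) := by
  haveI : Finite (Sylow p G) :=
    Finite.of_injective (fun P : Sylow p G => (P : Subgroup G))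
      (fun P Q h => Sylow.ext h)
  have hF' : IsPGroup p (F.subgroupOf W) :=
    hF.comap_of_injective W.subtype W.subtype_injective
  obtain ⟨Q, hQ⟩ := hF'.exists_le_sylow
  obtain ⟨w, hw⟩ := MulAction.exists_smul_eq (↥W) Q (S.subtype hSW)
  refine ⟨(w : G), w.2, fun x hx => ?_⟩
  have hx' : (⟨x, hFW hx⟩ : ↥W) ∈ Q := hQ (by simpa [Subgroup.mem_subgroupOf] using hx)
  have hmem : (MulAut.conj w) • (⟨x, hFW hx⟩ : ↥W) ∈ (w • Q : Sylow p ↥W) := by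
    rw [Sylow.smul_def]
    exact Subgroup.smul_mem_pointwise_smul _ _ _ hx'
  rw [hw] at hmem
  have hmem' : ((MulAut.conj w) • (⟨x, hFW hx⟩ : ↥W) : ↥W) ∈ (S : Subgroup G).subgroupOf W := by
    rw [← Sylow.coe_subtype]; exact hmem
  rw [Subgroup.mem_subgroupOf] at hmem'
  simpa [MulAut.conj_apply] using hmem'

/-- If `S` normalizes `V` and `V ≤ N ⊔ S` with `N` normal, then every element of
`V` factors as `b * a` with `b ∈ S ∩ V` and `a ∈ N ∩ V`. -/
theorem aux_decomp {p : ℕ} [Fact p.Prime] [Finite G] (S : Sylow p G) (N V : Subgroup G)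
    (hN : N.Normal) (hSV : (S : Subgroup G) ≤ Subgroup.normalizer (V : Set G)) (hV : V ≤ N ⊔ (S : Subgroup G))
    {v : G} (hv : v ∈ V) :
    ∃ b, b ∈ (S : Subgroup G) ∧ b ∈ V ∧ ∃ a, a ∈ N ∧ a ∈ V ∧ v = b * a := by
  classical
  set A : Subgroup V := N.subgroupOf V with hA
  set B : Subgroup V := (S : Subgroup G).subgroupOf V with hB
  haveI : A.Normal := hN.subgroupOf V
  have aux_not_dvd : ¬ p ∣ (S : Subgroup G).relIndex V := aux_not_dvd_relIndex S V hSV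
  have hAB : B ⊔ A = ⊤ := by
    rw [← Subgroup.index_eq_one]
    have dA : (B ⊔ A).index ∣ A.index := Subgroup.index_dvd_of_le le_sup_right
    have dB : (B ⊔ A).index ∣ B.index := Subgroup.index_dvd_of_le le_sup_left
    have hA' : ∃ k, A.index = p ^ k := by
      have h1 : A.index = Nat.card (V.map (QuotientGroup.mk' N)) := by
        have h0 := Subgroup.relIndex_ker (QuotientGroup.mk' N) (K := V)
        rw [QuotientGroup.ker_mk'] at h0
        exact h0
      have h2 : V.map (QuotientGroup.mk' N) ≤ (S : Subgroup G).map (QuotientGroup.mk' N) := by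
        calc V.map (QuotientGroup.mk' N)
            ≤ (N ⊔ (S : Subgroup G)).map (QuotientGroup.mk' N) := Subgroup.map_mono hV
          _ = N.map (QuotientGroup.mk' N) ⊔ (S : Subgroup G).map (QuotientGroup.mk' N) := by
              rw [Subgroup.map_sup]
          _ = (S : Subgroup G).map (QuotientGroup.mk' N) := by
              rw [(Subgroup.map_eq_bot_iff N).mpr (QuotientGroup.ker_mk' N).ge, bot_sup_eq]
      have h3 : IsPGroup p ((S : Subgroup G).map (QuotientGroup.mk' N)) :=
        S.isPGroup'.map _
      have h4 : IsPGroup p (V.map (QuotientGroup.mk' N)) := h3.to_le h2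
      obtain ⟨k, hk⟩ := IsPGroup.iff_card.mp h4
      exact ⟨k, h1.trans hk⟩
    obtain ⟨k, hk⟩ := hA'
    obtain ⟨j, hj, hd⟩ := (Nat.dvd_prime_pow (Fact.out : p.Prime)).mp (hk ▸ dA)
    match j, hd with
    | 0, hd => simpa using hd
    | (j+1), hd =>
      exfalso
      apply aux_not_dvd
      calc p ∣ p ^ (j+1) := dvd_pow_self p (Nat.succ_ne_zero j)
        _ = (B ⊔ A).index := hd.symm
        _ ∣ B.index := dB
  have hvmem : (⟨v, hv⟩ : ↥V) ∈ B ⊔ A := hAB ▸ Subgroup.mem_top _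
  rw [← SetLike.mem_coe, Subgroup.mul_normal B A] at hvmem
  obtain ⟨b, hb, a, ha, hba⟩ := hvmem
  refine ⟨(b : G), ?_, b.2, (a : G), ?_, a.2, ?_⟩
  · exact (Subgroup.mem_subgroupOf).mp hb
  · exact (Subgroup.mem_subgroupOf).mp ha
  · have := congrArg (Subtype.val) hba
    simpa using this.symm

end Auxiliary

/-- If `N ⊴ G`, `H` is subnormal in the finite group `G` and is normalized by
the Sylow `p`-subgroup `S`, then every `g ∈ NH` can be written as `g = nh` with
`n ∈ N`, `h ∈ H` and `S_g = S_{(n,h)}`, where `S_g = {s ∈ S : s^g ∈ S}` and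
`S_{(n,h)} = {s ∈ S : s^n ∈ S and (s^n)^h ∈ S}` (with `s^g = g⁻¹sg`). -/
theorem product_normal_subnormal_splitting {p : ℕ} [Fact p.Prime] {G : Type*}
    [Group G] [Finite G] (S : Sylow p G) (N : Subgroup G) (hN : N.Normal)
    (H : Subgroup G) (hH : IsSubnormal H)
    (hSH : (S : Subgroup G) ≤ Subgroup.normalizer (H : Set G))
    (g : G) (hg : g ∈ (N : Set G) * (H : Set G)) :
    ∃ n ∈ N, ∃ h ∈ H,
      g = n * h ∧
        {s : G | s ∈ (S : Subgroup G) ∧ g⁻¹ * s * g ∈ (S : Subgroup G)} =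
          {s : G | s ∈ (S : Subgroup G) ∧ n⁻¹ * s * n ∈ (S : Subgroup G) ∧
            h⁻¹ * (n⁻¹ * s * n) * h ∈ (S : Subgroup G)} := by
  classical
  obtain ⟨n₀, hn₀, h₀, hh₀, hgeq⟩ := hg
  -- the conjugation homomorphisms
  set c : G → G →* G := fun a => (MulAut.conj a).toMonoidHom with hc
  -- F = n₀⁻¹ (S ∩ ᵍS) n₀
  set F : Subgroup G := ((S : Subgroup G) ⊓ (S : Subgroup G).comap (c g⁻¹)).comap (c n₀)
    with hFdef
  have mem_F : ∀ x : G, x ∈ F ↔ n₀ * x * n₀⁻¹ ∈ (S : Subgroup G) ∧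
      g⁻¹ * (n₀ * x * n₀⁻¹) * g ∈ (S : Subgroup G) := by
    intro x
    simp only [hFdef, hc, Subgroup.mem_comap, Subgroup.mem_inf,
      MulEquiv.coe_toMonoidHom, MulAut.conj_apply, inv_inv]
  have hFp : IsPGroup p F := by
    have h1 : IsPGroup p ((S : Subgroup G).comap (c n₀)) :=
      S.isPGroup'.comap_of_injective (c n₀) (MulAut.conj n₀).injective
    exact h1.to_le (Subgroup.comap_mono inf_le_left)
  set W : Subgroup G := (N ⊔ (S : Subgroup G)) ⊓ (H ⊔ (S : Subgroup G)) with hWdef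
  have hSW : (S : Subgroup G) ≤ W := le_inf le_sup_right le_sup_right
  have hFW : F ≤ W := by
    intro x hx
    obtain ⟨hx1, hx2⟩ := (mem_F x).mp hx
    refine Subgroup.mem_inf.mpr ⟨?_, ?_⟩
    · have hxeq : x = n₀⁻¹ * ((n₀ * x * n₀⁻¹) * n₀ * (n₀ * x * n₀⁻¹)⁻¹) * (n₀ * x * n₀⁻¹) := by
        group
      rw [hxeq]
      exact mul_mem (mul_mem (Subgroup.mem_sup_left (inv_mem hn₀))
        (Subgroup.mem_sup_left (hN.conj_mem n₀ hn₀ _))) (Subgroup.mem_sup_right hx1)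
    · have ht : h₀⁻¹ * x * h₀ ∈ (S : Subgroup G) := by
        have heq : g⁻¹ * (n₀ * x * n₀⁻¹) * g = h₀⁻¹ * x * h₀ := by rw [← hgeq]; group
        rwa [heq] at hx2
      have hxeq : x = (h₀ * ((h₀⁻¹ * x * h₀) * h₀⁻¹ * (h₀⁻¹ * x * h₀)⁻¹)) *
          (h₀⁻¹ * x * h₀) := by group
      rw [hxeq]
      refine mul_mem (Subgroup.mem_sup_left (mul_mem hh₀ ?_)) (Subgroup.mem_sup_right ht)
      exact (Subgroup.mem_normalizer_iff.mp (hSH ht) h₀⁻¹).mp (inv_mem hh₀)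
  obtain ⟨w, hwW, hw⟩ := aux_conj S W F hSW hFW hFp
  obtain ⟨hwNS, hwHS⟩ := Subgroup.mem_inf.mp hwW
  have hwSH : w ∈ (S : Subgroup G) ⊔ H := by rwa [sup_comm] at hwHS
  obtain ⟨s₁, hs₁, v, hvH, hwsv⟩ := aux_mem_sup_decomp (S : Subgroup G) H hSH w hwSH
  have hveq' : v = s₁⁻¹ * w := by rw [hwsv]; group
  have hvNS : v ∈ N ⊔ (S : Subgroup G) := by
    rw [hveq']
    exact mul_mem (Subgroup.mem_sup_right (inv_mem hs₁)) hwNS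
  have hvconj : ∀ x ∈ F, v * x * v⁻¹ ∈ (S : Subgroup G) := by
    intro x hx
    have heq : v * x * v⁻¹ = s₁⁻¹ * (w * x * w⁻¹) * s₁ := by rw [hveq']; group
    rw [heq]
    exact mul_mem (mul_mem (inv_mem hs₁) (hw x hx)) hs₁
  set V : Subgroup G := H ⊓ (N ⊔ (S : Subgroup G)) with hVdef
  have hSV : (S : Subgroup G) ≤ Subgroup.normalizer (V : Set G) := by
    intro s hs
    rw [Subgroup.mem_normalizer_iff]
    intro y
    constructor
    · rintro ⟨hyH, hyNS⟩
      exact ⟨(Subgroup.mem_normalizer_iff.mp (hSH hs) y).mp hyH,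
        mul_mem (mul_mem (Subgroup.mem_sup_right hs) hyNS)
          (Subgroup.mem_sup_right (inv_mem hs))⟩
    · rintro ⟨hyH, hyNS⟩
      refine ⟨(Subgroup.mem_normalizer_iff.mp (hSH hs) y).mpr hyH, ?_⟩
      have hyeq : y = s⁻¹ * (s * y * s⁻¹) * s := by group
      rw [hyeq]
      exact mul_mem (mul_mem (Subgroup.mem_sup_right (inv_mem hs)) hyNS)
        (Subgroup.mem_sup_right hs)
  have hvV : v ∈ V := Subgroup.mem_inf.mpr ⟨hvH, hvNS⟩
  obtain ⟨b, hbS, hbV, a, haN, haV, hveq⟩ := aux_decomp S N V hN hSV inf_le_right hvV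
  have haH : a ∈ H := (Subgroup.mem_inf.mp haV).1
  have haconj : ∀ x ∈ F, a * x * a⁻¹ ∈ (S : Subgroup G) := by
    intro x hx
    have ha' : a = b⁻¹ * v := by rw [hveq]; group
    have heq : a * x * a⁻¹ = b⁻¹ * (v * x * v⁻¹) * b := by rw [ha']; group
    rw [heq]
    exact mul_mem (mul_mem (inv_mem hbS) (hvconj x hx)) hbS
  refine ⟨n₀ * a⁻¹, mul_mem hn₀ (inv_mem haN), a * h₀, mul_mem haH hh₀, ?_, ?_⟩
  · rw [← hgeq]; group
  · ext s
    simp only [Set.mem_setOf_eq]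
    constructor
    · rintro ⟨hsS, hsg⟩
      have hxF : n₀⁻¹ * s * n₀ ∈ F := by
        rw [mem_F]
        constructor
        · have heq : n₀ * (n₀⁻¹ * s * n₀) * n₀⁻¹ = s := by group
          rw [heq]; exact hsS
        · have heq : g⁻¹ * (n₀ * (n₀⁻¹ * s * n₀) * n₀⁻¹) * g = g⁻¹ * s * g := by group
          rw [heq]; exact hsg
      refine ⟨hsS, ?_, ?_⟩
      · have heq : (n₀ * a⁻¹)⁻¹ * s * (n₀ * a⁻¹) = a * (n₀⁻¹ * s * n₀) * a⁻¹ := by group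
        rw [heq]; exact haconj _ hxF
      · have heq : (a * h₀)⁻¹ * ((n₀ * a⁻¹)⁻¹ * s * (n₀ * a⁻¹)) * (a * h₀) =
            g⁻¹ * s * g := by rw [← hgeq]; group
        rw [heq]; exact hsg
    · rintro ⟨hsS, h1, h2⟩
      refine ⟨hsS, ?_⟩
      have heq : g⁻¹ * s * g =
          (a * h₀)⁻¹ * ((n₀ * a⁻¹)⁻¹ * s * (n₀ * a⁻¹)) * (a * h₀) := by rw [← hgeq]; group
      rw [heq]; exact h2
end
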